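/- arXiv:2109.04246 — 3 statements merged into one kernel-verified Lean document; each statement's English description precedes it below -/
import Mathlib

section
/- Let (X,f) be a dynamical system with X a compact metric space and f : X → X continuous. If the family {fⁿ : n ∈ ℤ₊} is equicontinuous (or, if f is a homeomorphism, {fⁿ : n ∈ ℤ} is equicontinuous), then the induced map 2^f : 2^X → 2^X, A ↦ f(A), on the hyperspace of nonempty compact subsets with the Hausdorff metric, also generates an equicontinuous family {(2^f)ⁿ}. -/
open TopologicalSpace

/-- The induced map on the hyperspace of nonempty compact subsets, `A ↦ f(A)`. -/
noncomputable def inducedHyper {X : Type*} [MetricSpace X] (f : X → X) (hf : Continuous f) :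
    NonemptyCompacts X → NonemptyCompacts X :=
  fun A => ⟨⟨f '' (A : Set X), A.isCompact.image hf⟩, A.nonempty.image f⟩

lemma inducedHyper_iterate_coe {X : Type*} [MetricSpace X] (f : X → X) (hf : Continuous f)
    (A : NonemptyCompacts X) (n : ℕ) :
    (((inducedHyper f hf)^[n] A : NonemptyCompacts X) : Set X) = f^[n] '' (A : Set X) := by
  induction n with
  | zero => simp
  | succ n ih =>
    rw [Function.iterate_succ_apply', Function.iterate_succ']
    show f '' _ = _
    rw [ih, Set.image_comp]

/-- If the family of iterates `{fⁿ : n ∈ ℕ}` of a continuous map `f` on a compact metric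
space is equicontinuous, then the family of iterates of the induced map `2^f` on the
hyperspace of nonempty compact subsets (with the Hausdorff metric) is equicontinuous. -/
theorem inducedHyper_equicontinuous {X : Type*} [MetricSpace X] [CompactSpace X]
    (f : X → X) (hf : Continuous f)
    (heq : ∀ ε > (0 : ℝ), ∃ δ > (0 : ℝ), ∀ x y : X, dist x y < δ →
      ∀ n : ℕ, dist (f^[n] x) (f^[n] y) < ε) :
    ∀ ε > (0 : ℝ), ∃ δ > (0 : ℝ), ∀ A B : NonemptyCompacts X, dist A B < δ →
      ∀ n : ℕ, dist ((inducedHyper f hf)^[n] A) ((inducedHyper f hf)^[n] B) < ε := by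
  intro ε hε
  obtain ⟨δ, hδ, hδε⟩ := heq (ε / 2) (by linarith)
  refine ⟨δ, hδ, fun A B hAB n => ?_⟩
  have hABh : Metric.hausdorffDist (A : Set X) (B : Set X) < δ := by
    rwa [Metric.NonemptyCompacts.dist_eq] at hAB
  have hne : EMetric.hausdorffEdist (A : Set X) (B : Set X) ≠ ⊤ :=
    Metric.hausdorffEdist_ne_top_of_nonempty_of_bounded A.nonempty B.nonempty
      A.isCompact.isBounded B.isCompact.isBounded
  rw [Metric.NonemptyCompacts.dist_eq, inducedHyper_iterate_coe, inducedHyper_iterate_coe]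
  have key : Metric.hausdorffDist (f^[n] '' (A : Set X)) (f^[n] '' (B : Set X)) ≤ ε / 2 := by
    apply Metric.hausdorffDist_le_of_mem_dist (by linarith)
    · rintro _ ⟨x, hx, rfl⟩
      obtain ⟨y, hy, hxy⟩ := Metric.exists_dist_lt_of_hausdorffDist_lt hx hABh hne
      exact ⟨f^[n] y, Set.mem_image_of_mem _ hy, (hδε x y hxy n).le⟩
    · rintro _ ⟨y, hy, rfl⟩
      obtain ⟨x, hx, hxy⟩ := Metric.exists_dist_lt_of_hausdorffDist_lt' hy hABh hne
      exact ⟨f^[n] x, Set.mem_image_of_mem _ hx,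
        (by rw [dist_comm]; exact (hδε x y hxy n).le)⟩
  linarith
end

section
/- Let X be a continuum and U an open proper nonempty subset of X. Then every connected component of U is nondegenerate (contains more than one point); in particular U is uncountable. -/
open Set Metric

/-- Šura-Bura style separation: in a compact Hausdorff space, a connected component
disjoint from a closed set can be separated from it by a clopen set. -/
lemma exists_isClopen_disjoint_of_compact {K : Type*} [TopologicalSpace K] [T2Space K]
    [CompactSpace K] (x : K) {S : Set K} (hS : IsClosed S)
    (hd : Disjoint (connectedComponent x) S) :
    ∃ B : Set K, IsClopen B ∧ x ∈ B ∧ Disjoint B S := by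
  have : Nonempty { s : Set K // IsClopen s ∧ x ∈ s } :=
    ⟨⟨univ, isClopen_univ, mem_univ x⟩⟩
  have hempty : (S ∩ ⋂ s : { s : Set K // IsClopen s ∧ x ∈ s }, (s : Set K)) = ∅ := by
    rw [← connectedComponent_eq_iInter_isClopen x]
    exact (disjoint_iff_inter_eq_empty.mp hd.symm)
  obtain ⟨u, hu⟩ := hS.isCompact.elim_finite_subfamily_closed
    (fun s : { s : Set K // IsClopen s ∧ x ∈ s } => (s : Set K))
    (fun s => s.2.1.1) hempty
  refine ⟨⋂ s ∈ u, (s : Set K), isClopen_biInter_finset fun s _ => s.2.1, ?_, ?_⟩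
  · exact mem_iInter₂.2 fun s _ => s.2.2
  · rw [disjoint_iff_inter_eq_empty, inter_comm]; exact hu

/-- Boundary bumping inside a closed ball: the connected component of the center of a
closed ball (in a connected compact space, assuming the ball is proper) reaches the sphere. -/
lemma component_reaches_sphere {X : Type*} [MetricSpace X] [CompactSpace X] [ConnectedSpace X]
    (x z : X) (r : ℝ) (hr : 0 < r) (hz : r < dist z x) :
    ∃ p : closedBall x r, p ∈ connectedComponent (⟨x, mem_closedBall_self hr.le⟩ :
      closedBall x r) ∧ dist (p : X) x = r := by
  have hKc : IsCompact (closedBall x r) := (isClosed_closedBall).isCompact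
  haveI : CompactSpace (closedBall x r) := isCompact_iff_compactSpace.mp hKc
  set x' : closedBall x r := ⟨x, mem_closedBall_self hr.le⟩
  by_contra h
  push_neg at h
  set S : Set (closedBall x r) := {p | dist (p : X) x = r} with hSdef
  have hSclosed : IsClosed S :=
    isClosed_eq (continuous_subtype_val.dist continuous_const) continuous_const
  have hdisj : Disjoint (connectedComponent x') S := by
    rw [disjoint_left]
    intro p hp hpS
    exact (h p hp) hpS
  obtain ⟨B, hB, hxB, hBS⟩ := exists_isClopen_disjoint_of_compact x' hSclosed hdisj
  -- B maps to a clopen subset of X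
  set B' : Set X := Subtype.val '' B with hB'def
  have hB'closed : IsClosed B' :=
    (hB.1.isCompact.image continuous_subtype_val).isClosed
  have hB'ball : B' ⊆ ball x r := by
    rintro _ ⟨p, hpB, rfl⟩
    rcases lt_or_eq_of_le (mem_closedBall.mp p.2) with hlt | heq
    · exact mem_ball.mpr hlt
    · exact absurd heq (fun hh => (disjoint_left.mp hBS hpB) hh)
  have hB'open : IsOpen B' := by
    obtain ⟨O, hO, hOeq⟩ := isOpen_induced_iff.mp hB.2
    have : B' = O ∩ ball x r := by
      apply Subset.antisymm
      · rintro _ ⟨p, hpB, rfl⟩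
        exact ⟨by rw [← hOeq] at hpB; exact hpB, hB'ball ⟨p, hpB, rfl⟩⟩
      · rintro q ⟨hqO, hqball⟩
        refine ⟨⟨q, ball_subset_closedBall hqball⟩, ?_, rfl⟩
        rw [← hOeq]; exact hqO
    rw [this]; exact hO.inter isOpen_ball
  have hclopen : IsClopen B' := ⟨hB'closed, hB'open⟩
  rcases isClopen_iff.mp hclopen with hemp | huniv
  · exact absurd hemp (Nonempty.ne_empty ⟨x, x', hxB, rfl⟩)
  · have : z ∈ B' := huniv ▸ mem_univ z
    have := hB'ball this
    rw [mem_ball] at this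
    exact absurd hz (not_lt.mpr this.le)

/-- In a continuum `X`, every connected component of a nonempty proper open subset `U` is
nondegenerate (contains more than one point); in particular `U` is uncountable. -/
theorem component_nondegenerate_of_open {X : Type*}
    [MetricSpace X] [CompactSpace X] [ConnectedSpace X] [Nonempty X]
    (U : Set X) (hU : IsOpen U) (hne : U.Nonempty) (hproper : U ≠ Set.univ) :
    (∀ x ∈ U, ∃ y ∈ connectedComponentIn U x, y ≠ x) ∧ ¬ U.Countable := by
  obtain ⟨z, hz⟩ : ∃ z, z ∉ U := by
    by_contra h; push_neg at h
    exact hproper (eq_univ_of_forall h)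
  have key : ∀ x ∈ U, ∃ y ∈ connectedComponentIn U x, y ≠ x := by
    intro x hx
    obtain ⟨ε, hε, hball⟩ := Metric.isOpen_iff.mp hU x hx
    have hzx : 0 < dist z x := dist_pos.mpr (fun h => hz (h ▸ hx))
    set r := min (ε / 2) (dist z x / 2) with hrdef
    have hr : 0 < r := lt_min (half_pos hε) (half_pos hzx)
    have hrz : r < dist z x := (min_le_right _ _).trans_lt (half_lt_self hzx)
    have hrU : closedBall x r ⊆ U := fun p hp =>
      hball (lt_of_le_of_lt (mem_closedBall.mp hp)
        ((min_le_left _ _).trans_lt (half_lt_self hε)))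
    obtain ⟨p, hpA, hpr⟩ := component_reaches_sphere x z r hr hrz
    refine ⟨(p : X), ?_, ?_⟩
    · have himg : Subtype.val '' (connectedComponent (⟨x, mem_closedBall_self hr.le⟩ :
          closedBall x r)) ⊆ connectedComponentIn U x := by
        apply IsPreconnected.subset_connectedComponentIn
        · exact (isPreconnected_connectedComponent).image _
            continuous_subtype_val.continuousOn
        · exact ⟨_, mem_connectedComponent, rfl⟩
        · rintro _ ⟨q, _, rfl⟩; exact hrU q.2
      exact himg ⟨p, hpA, rfl⟩
    · intro h
      rw [h, dist_self] at hpr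
      exact hr.ne hpr
  refine ⟨key, ?_⟩
  intro hcount
  obtain ⟨x, hx⟩ := hne
  obtain ⟨y, hy, hyx⟩ := key x hx
  set d := dist y x with hddef
  have hd : 0 < d := dist_pos.mpr hyx
  have hIcc : Icc (0 : ℝ) d ⊆ (fun p => dist p x) '' connectedComponentIn U x := by
    apply IsPreconnected.Icc_subset
    · exact isPreconnected_connectedComponentIn.image _
        (continuous_id.dist continuous_const).continuousOn
    · exact ⟨x, mem_connectedComponentIn hx, dist_self x⟩
    · exact ⟨y, hy, rfl⟩
  have hCcount : ((fun p => dist p x) '' connectedComponentIn U x).Countable :=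
    (hcount.mono (connectedComponentIn_subset U x)).image _
  have : (Icc (0 : ℝ) d).Countable := hCcount.mono hIcc
  have hcard := Cardinal.mk_Icc_real hd
  rw [← Set.countable_coe_iff] at this
  have := Cardinal.mk_le_aleph0_iff.mpr this
  rw [hcard] at this
  exact absurd this (not_le.mpr Cardinal.aleph0_lt_continuum)
end

section
/- Let f : X → X be a homeomorphism of a regular curve X and let D be a connected component of X \ Ω(f). Then every pair of points in D is asymptotic with respect to f (i.e., lim_{n→∞} d(fⁿ(x), fⁿ(y)) = 0 for all x, y ∈ D), and likewise with respect to f⁻¹. -/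
open Filter

/-- The set of nonwandering points of `f`. -/
def nonwandering {X : Type*} [TopologicalSpace X] (f : X → X) : Set X :=
  {x : X | ∀ U ∈ nhds x, ∃ n : ℕ, 0 < n ∧ ((f^[n] ⁻¹' U) ∩ U).Nonempty}

open Set Topology

section Aux

variable {X : Type*} [TopologicalSpace X]

lemma isOpen_compl_nonwandering (f : X → X) : IsOpen (nonwandering f)ᶜ := by
  rw [isOpen_iff_mem_nhds]
  intro y hy
  simp only [mem_compl_iff, nonwandering, mem_setOf_eq, not_forall] at hy
  obtain ⟨U, hU, hne⟩ := hy
  filter_upwards [interior_mem_nhds.mpr hU] with z hz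
  intro hzNW
  exact hne (hzNW U (mem_nhds_iff.mpr ⟨interior U, interior_subset, isOpen_interior, hz⟩))

lemma nonwandering_symm_subset (f : X ≃ₜ X) :
    nonwandering (⇑f.symm) ⊆ nonwandering (⇑f) := by
  intro q hq U hU
  obtain ⟨n, hn, w, hw1, hw2⟩ := hq U hU
  refine ⟨n, hn, (⇑f.symm)^[n] w, ?_, hw1⟩
  have : (⇑f)^[n] ((⇑f.symm)^[n] w) = w :=
    (Function.LeftInverse.iterate f.apply_symm_apply n) w
  simpa [this] using hw2

lemma isClosed_connectedComponentIn {C : Set X} (hC : IsClosed C) (p : X) :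
    IsClosed (connectedComponentIn C p) := by
  by_cases hp : p ∈ C
  · rw [connectedComponentIn_eq_image hp]
    exact (hC.isClosedEmbedding_subtypeVal.isClosedMap _ isClosed_connectedComponent)
  · rw [connectedComponentIn_eq_empty hp]; exact isClosed_empty

end Aux

section Bumping

variable {X : Type*} [TopologicalSpace X] [CompactSpace X] [T2Space X] [ConnectedSpace X]

/-- Boundary bumping: in a connected compact T2 space, the connected component of a point
in a proper closed subset meets the frontier of that subset. -/
lemma bumping {C : Set X} (hC : IsClosed C) (hCne : C ≠ univ) {p : X} (hp : p ∈ C) :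
    (connectedComponentIn C p ∩ frontier C).Nonempty := by
  by_contra hdis
  rw [Set.not_nonempty_iff_eq_empty] at hdis
  haveI : CompactSpace C := isCompact_iff_compactSpace.mp (hC.isCompact)
  set pc : C := ⟨p, hp⟩
  have himg : connectedComponentIn C p = (↑) '' connectedComponent pc :=
    connectedComponentIn_eq_image hp
  -- the frontier inside the subtype
  set Fr : Set C := (↑) ⁻¹' frontier C with hFr
  have hFrclosed : IsClosed Fr := isClosed_frontier.preimage continuous_subtype_val
  have hFrcomp : IsCompact Fr := hFrclosed.isCompact
  have hinter : (Fr ∩ ⋂ s : { s : Set C // IsClopen s ∧ pc ∈ s }, (s : Set C)) = ∅ := by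
    rw [← connectedComponent_eq_iInter_isClopen]
    ext w
    simp only [mem_inter_iff, mem_empty_iff_false, iff_false, not_and, hFr, mem_preimage]
    intro hw hw2
    have : (w : X) ∈ connectedComponentIn C p ∩ frontier C := by
      rw [himg]; exact ⟨⟨w, hw2, rfl⟩, hw⟩
    rw [hdis] at this; exact this
  obtain ⟨t, ht⟩ := hFrcomp.elim_finite_subfamily_closed _
    (fun s : { s : Set C // IsClopen s ∧ pc ∈ s } => s.2.1.1) hinter
  set Z : Set C := ⋂ s ∈ t, (s : Set C) with hZ
  have hZclopen : IsClopen Z := by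
    apply Set.Finite.isClopen_biInter t.finite_toSet
    exact fun s _ => s.2.1
  have hpcZ : pc ∈ Z := by
    rw [hZ]; exact mem_iInter₂.mpr fun s _ => s.2.2
  have hZF : Z ∩ Fr = ∅ := by
    rw [← ht]; exact (inter_comm _ _)
  -- push down to X
  set Z' : Set X := (↑) '' Z with hZ'
  have hZ'C : Z' ⊆ C := by rintro _ ⟨w, _, rfl⟩; exact w.2
  have hZ'F : Z' ∩ frontier C = ∅ := by
    ext w
    simp only [mem_inter_iff, mem_empty_iff_false, iff_false, not_and]
    rintro ⟨u, hu, rfl⟩ hfr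
    have : u ∈ Z ∩ Fr := ⟨hu, by simpa [hFr] using hfr⟩
    rw [hZF] at this; exact this
  have hZ'closed : IsClosed Z' :=
    hC.isClosedEmbedding_subtypeVal.isClosedMap _ hZclopen.isClosed
  have hZ'int : Z' ⊆ interior C := by
    intro w hw
    have hwC : w ∈ C := hZ'C hw
    have : w ∉ frontier C := fun hfr => by
      have : w ∈ Z' ∩ frontier C := ⟨hw, hfr⟩
      rw [hZ'F] at this; exact this
    rw [hC.frontier_eq] at this
    by_contra hint
    exact this ⟨hwC, hint⟩
  have hZ'open : IsOpen Z' := by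
    obtain ⟨O, hO, hOZ⟩ := isOpen_induced_iff.mp hZclopen.isOpen
    have himg2 : Z' = O ∩ C := by
      rw [hZ', ← hOZ, Subtype.image_preimage_coe]
      exact inter_comm _ _
    have : Z' = O ∩ interior C := by
      apply Subset.antisymm
      · exact subset_inter (fun w hw => (himg2 ▸ hw).1) hZ'int
      · intro w hw
        rw [himg2]; exact ⟨hw.1, interior_subset hw.2⟩
    rw [this]; exact hO.inter isOpen_interior
  have : Z' = univ := by
    rcases isClopen_iff.mp ⟨hZ'closed, hZ'open⟩ with h | h
    · exfalso
      have hpZ' : p ∈ Z' := ⟨pc, hpcZ, rfl⟩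
      rw [h] at hpZ'
      exact hpZ'
    · exact h
  exact hCne (univ_subset_iff.mp (this ▸ hZ'C))

end Bumping


section Key

variable {X : Type*} [MetricSpace X] [CompactSpace X] [ConnectedSpace X]

/-- Every point of an open set `W` has a compact connected neighborhood inside `W`,
assuming rim-finiteness. -/
lemma key_nbhd
    (hreg : ∀ x : X, ∀ ε > (0 : ℝ), ∃ U : Set X,
      IsOpen U ∧ x ∈ U ∧ U ⊆ Metric.ball x ε ∧ (frontier U).Finite)
    {W : Set X} (hW : IsOpen W) {p : X} (hpW : p ∈ W) :
    ∃ K : Set X, IsCompact K ∧ IsPreconnected K ∧ K ⊆ W ∧ K ∈ nhds p := by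
  by_cases htriv : ∀ q : X, q = p
  · refine ⟨univ, isCompact_univ, isPreconnected_univ, fun q _ => (htriv q) ▸ hpW, univ_mem⟩
  push_neg at htriv
  obtain ⟨q, hq⟩ := htriv
  obtain ⟨εW, hεW, hball⟩ := Metric.isOpen_iff.mp hW p hpW
  set ε : ℝ := min (dist q p / 2) (εW / 2) with hε
  have hdq : 0 < dist q p := dist_pos.mpr hq
  have hεpos : 0 < ε := lt_min (by linarith) (by linarith)
  obtain ⟨U, hUopen, hpU, hUball, hFfin⟩ := hreg p ε hεpos
  set C : Set X := closure U with hC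
  have hCclosed : IsClosed C := isClosed_closure
  have hCball : C ⊆ Metric.closedBall p ε :=
    (closure_mono hUball).trans Metric.closure_ball_subset_closedBall
  have hCW : C ⊆ W := fun w hw => hball (lt_of_le_of_lt
    (Metric.mem_closedBall.mp (hCball hw))
    (lt_of_le_of_lt (min_le_right _ _) (by linarith)))
  have hCne : C ≠ univ := by
    intro h
    have : q ∈ C := h ▸ mem_univ q
    have h1 : dist q p ≤ ε := Metric.mem_closedBall.mp (hCball this)
    have h2 : ε ≤ dist q p / 2 := min_le_left _ _
    have : 0 < dist q p := dist_pos.mpr hq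
    linarith
  have hpC : p ∈ C := subset_closure hpU
  have hfrC : frontier C ⊆ frontier U := by
    have : frontier C ⊆ closure U \ interior U :=
      fun w hw => ⟨(closure_closure (s := U)) ▸ hw.1,
        fun hint => hw.2 (interior_mono subset_closure hint)⟩
    exact this
  have hfrCfin : (frontier C).Finite := hFfin.subset hfrC
  set K : Set X := connectedComponentIn C p with hK
  have hKclosed : IsClosed K := isClosed_connectedComponentIn hCclosed p
  -- the union of components of frontier points not in K
  set F' : Set X := frontier C \ K with hF'
  have hF'fin : F'.Finite := hfrCfin.subset diff_subset
  set N : Set X := ⋃ a ∈ F', connectedComponentIn C a with hN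
  have hNclosed : IsClosed N := by
    apply hF'fin.isClosed_biUnion
    exact fun a _ => isClosed_connectedComponentIn hCclosed a
  have hKN : K ∩ N = ∅ := by
    ext w
    simp only [mem_inter_iff, mem_empty_iff_false, iff_false, not_and, hN, mem_iUnion]
    rintro hwK ⟨a, haF', hwa⟩
    have h1 : connectedComponentIn C p = connectedComponentIn C w := connectedComponentIn_eq hwK
    have h2 : connectedComponentIn C a = connectedComponentIn C w := connectedComponentIn_eq hwa
    have haC : a ∈ C := hCclosed.frontier_subset haF'.1
    have : a ∈ K := by
      rw [hK, h1, ← h2]; exact mem_connectedComponentIn haC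
    exact haF'.2 this
  have hCKN : C ⊆ K ∪ N := by
    intro v hv
    obtain ⟨a, haK, hafr⟩ := bumping hCclosed hCne hv
    by_cases haKmem : a ∈ K
    · left
      have h1 : connectedComponentIn C v = connectedComponentIn C a := connectedComponentIn_eq haK
      have h2 : connectedComponentIn C p = connectedComponentIn C a := connectedComponentIn_eq haKmem
      rw [hK, h2, ← h1]
      exact mem_connectedComponentIn hv
    · right
      rw [hN]
      refine mem_iUnion₂.mpr ⟨a, ⟨hafr, haKmem⟩, ?_⟩
      rw [← connectedComponentIn_eq haK]
      exact mem_connectedComponentIn hv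
  refine ⟨K, hKclosed.isCompact, isPreconnected_connectedComponentIn,
    (connectedComponentIn_subset C p).trans hCW, ?_⟩
  have hpN : p ∉ N := fun hN' => by
    have : p ∈ K ∩ N := ⟨mem_connectedComponentIn hpC, hN'⟩
    rw [hKN] at this; exact this
  refine mem_nhds_iff.mpr ⟨U ∩ Nᶜ, ?_, hUopen.inter hNclosed.isOpen_compl, hpU, hpN⟩
  intro w hw
  rcases hCKN (subset_closure hw.1) with h | h
  · exact h
  · exact absurd h hw.2

end Key

section Main

variable {X : Type*} [MetricSpace X] [CompactSpace X]

lemma preconn_meets_frontier {s U : Set X} (hs : IsPreconnected s) (hU : IsOpen U)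
    (h1 : (s ∩ U).Nonempty) (h2 : (s \ closure U).Nonempty) :
    (s ∩ frontier U).Nonempty := by
  by_contra h
  rw [Set.not_nonempty_iff_eq_empty] at h
  have hsub : s ⊆ U ∪ (closure U)ᶜ := by
    intro w hw
    by_cases hcl : w ∈ closure U
    · left
      have hnf : w ∉ frontier U := fun hf => by
        have : w ∈ s ∩ frontier U := ⟨hw, hf⟩
        rw [h] at this; exact this
      rw [hU.frontier_eq] at hnf
      by_contra hwU
      exact hnf ⟨hcl, hwU⟩
    · right; exact hcl
  obtain ⟨w, hws, hwU, hwC⟩ := hs U (closure U)ᶜ hU isClosed_closure.isOpen_compl hsub h1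
    ⟨h2.choose, h2.choose_spec.1, h2.choose_spec.2⟩
  exact hwC (subset_closure hwU)

lemma main_asymp [Nonempty X]
    (hreg : ∀ x : X, ∀ ε > (0 : ℝ), ∃ U : Set X,
      IsOpen U ∧ x ∈ U ∧ U ⊆ Metric.ball x ε ∧ (frontier U).Finite)
    (g : X ≃ₜ X) {A : Set X} (hAc : IsCompact A) (hAconn : IsPreconnected A)
    (hAW : A ⊆ (nonwandering (⇑g))ᶜ) {y z : X} (hy : y ∈ A) (hz : z ∈ A) :
    Tendsto (fun n : ℕ => dist ((⇑g)^[n] y) ((⇑g)^[n] z)) atTop (nhds 0) := by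
  have hev : ∀ ε > (0 : ℝ), ∀ᶠ n in atTop, dist ((⇑g)^[n] y) ((⇑g)^[n] z) < ε := by
    intro ε hε
    by_contra hcon
    rw [Filter.not_eventually] at hcon
    set S : Set ℕ := {n | ¬dist ((⇑g)^[n] y) ((⇑g)^[n] z) < ε} with hSdef
    have hL : (atTop ⊓ 𝓟 S).NeBot := frequently_iff_neBot.mp hcon
    set L := atTop ⊓ 𝓟 S with hLdef
    obtain ⟨p, hp⟩ := exists_clusterPt_of_compactSpace (map (fun n => (⇑g)^[n] y) L)
    obtain ⟨U, hUopen, hpU, hUball, hFfin⟩ := hreg p (ε / 3) (by linarith)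
    have hclUball : closure U ⊆ Metric.closedBall p (ε / 3) :=
      (closure_mono hUball).trans Metric.closure_ball_subset_closedBall
    -- frequently the orbit of y visits U
    have hfreqU : ∃ᶠ n in L, (⇑g)^[n] y ∈ U := by
      rw [← frequently_map (f := L) (m := fun n => (⇑g)^[n] y)]
      rw [Filter.frequently_iff]
      intro V hV
      obtain ⟨w, hwU, hwV⟩ := clusterPt_iff_nonempty.mp hp (hUopen.mem_nhds hpU) hV
      exact ⟨w, hwV, hwU⟩
    -- for each such n, the image of A meets the finite frontier of U
    have hmeet : ∀ n ∈ S, (⇑g)^[n] y ∈ U → ((⇑g)^[n] '' A ∩ frontier U).Nonempty := by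
      intro n hnS hnU
      have hdist : ε ≤ dist ((⇑g)^[n] y) ((⇑g)^[n] z) := not_lt.mp hnS
      apply preconn_meets_frontier
        (hAconn.image _ (g.continuous.iterate n).continuousOn) hUopen
        ⟨(⇑g)^[n] y, Set.mem_image_of_mem _ hy, hnU⟩
      refine ⟨(⇑g)^[n] z, Set.mem_image_of_mem _ hz, fun hcl => ?_⟩
      have h1 : dist ((⇑g)^[n] z) p ≤ ε / 3 := Metric.mem_closedBall.mp (hclUball hcl)
      have h2 : dist ((⇑g)^[n] y) p < ε / 3 := Metric.mem_ball.mp (hUball hnU)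
      have := dist_triangle ((⇑g)^[n] y) p ((⇑g)^[n] z)
      rw [dist_comm ((⇑g)^[n] z) p] at h1
      linarith
    -- pick a frontier point hit infinitely often
    classical
    have hpick : ∀ n : ℕ, n ∈ S ∧ (⇑g)^[n] y ∈ U → ((⇑g)^[n] '' A ∩ frontier U).Nonempty :=
      fun n hn => hmeet n hn.1 hn.2
    set a : ℕ → X := fun n =>
      if h : n ∈ S ∧ (⇑g)^[n] y ∈ U then (hpick n h).choose else Classical.arbitrary X
      with hadef
    have haF : ∀ n, n ∈ S ∧ (⇑g)^[n] y ∈ U → a n ∈ (⇑g)^[n] '' A ∩ frontier U := by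
      intro n hn
      simp only [hadef, dif_pos hn]
      exact (hpick n hn).choose_spec
    have hfreqE : ∃ᶠ n in atTop, (n ∈ S ∧ (⇑g)^[n] y ∈ U) := by
      have := hfreqU
      rw [hLdef, frequently_inf_principal] at this
      exact this.mono fun n hn => ⟨hn.1, hn.2⟩
    have hb : ∃ b ∈ frontier U, ∃ᶠ n in atTop, ((n ∈ S ∧ (⇑g)^[n] y ∈ U) ∧ a n = b) := by
      by_contra hno
      push_neg at hno
      have hall : ∀ᶠ n in atTop, ∀ b ∈ frontier U, ¬((n ∈ S ∧ (⇑g)^[n] y ∈ U) ∧ a n = b) :=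
        (eventually_all_finite hFfin).mpr fun b hbF => ((hno b hbF).mono fun n hn h => hn h.1 h.2)
      obtain ⟨n, hn1, hn2⟩ := (hfreqE.and_eventually hall).exists
      exact hn2 (a n) (haF n hn1).2 ⟨hn1, rfl⟩
    obtain ⟨b, hbF, hbfreq⟩ := hb
    -- backward orbit of b visits A frequently
    have hback : ∀ n, (n ∈ S ∧ (⇑g)^[n] y ∈ U) ∧ a n = b → (⇑g.symm)^[n] b ∈ A := by
      rintro n ⟨hn, hab⟩
      obtain ⟨w, hwA, hwb⟩ := (haF n hn).1
      rw [hab] at hwb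
      rw [← hwb]
      have : (⇑g.symm)^[n] ((⇑g)^[n] w) = w :=
        (Function.LeftInverse.iterate g.symm_apply_apply n) w
      rw [this]; exact hwA
    set S₂ : Set ℕ := {n | (n ∈ S ∧ (⇑g)^[n] y ∈ U) ∧ a n = b} with hS₂def
    have hL₂ : (atTop ⊓ 𝓟 S₂).NeBot := frequently_iff_neBot.mp hbfreq
    obtain ⟨q, hq⟩ := exists_clusterPt_of_compactSpace
      (map (fun n => (⇑g.symm)^[n] b) (atTop ⊓ 𝓟 S₂))
    -- q is in A
    have hqA : q ∈ A := by
      have hmem : A ∈ map (fun n => (⇑g.symm)^[n] b) (atTop ⊓ 𝓟 S₂) := by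
        rw [mem_map]
        apply mem_of_superset (mem_inf_of_right (mem_principal_self S₂))
        intro n hn
        exact hback n hn
      have : ClusterPt q (𝓟 A) := hq.mono (le_principal_iff.mpr hmem)
      rw [← mem_closure_iff_clusterPt] at this
      rwa [hAc.isClosed.closure_eq] at this
    -- q is nonwandering: contradiction
    refine hAW hqA ?_
    intro V hV
    have hfreqV : ∃ᶠ n in atTop, n ∈ S₂ ∧ (⇑g.symm)^[n] b ∈ V := by
      have : ∃ᶠ w in map (fun n => (⇑g.symm)^[n] b) (atTop ⊓ 𝓟 S₂), w ∈ V := by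
        rw [Filter.frequently_iff]
        intro W hW
        obtain ⟨w, hwV, hwW⟩ := clusterPt_iff_nonempty.mp hq hV hW
        exact ⟨w, hwW, hwV⟩
      rw [frequently_map, frequently_inf_principal] at this
      exact this
    rw [frequently_atTop] at hfreqV
    obtain ⟨n₁, _, hn₁S, hn₁V⟩ := hfreqV 0
    obtain ⟨n₂, hn₂ge, hn₂S, hn₂V⟩ := hfreqV (n₁ + 1)
    refine ⟨n₂ - n₁, by omega, (⇑g.symm)^[n₂] b, ?_, hn₂V⟩
    have hsplit : (⇑g.symm)^[n₂] b = (⇑g.symm)^[n₂ - n₁] ((⇑g.symm)^[n₁] b) := by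
      rw [← Function.iterate_add_apply]
      congr 1
      omega
    have hleft : ∀ w, (⇑g)^[n₂ - n₁] ((⇑g.symm)^[n₂ - n₁] w) = w :=
      Function.LeftInverse.iterate g.apply_symm_apply (n₂ - n₁)
    show (⇑g)^[n₂ - n₁] ((⇑g.symm)^[n₂] b) ∈ V
    rw [hsplit, hleft]
    exact hn₁V
  rw [Metric.tendsto_atTop]
  intro ε hε
  obtain ⟨N, hN⟩ := eventually_atTop.mp (hev ε hε)
  refine ⟨N, fun n hn => ?_⟩
  rw [Real.dist_eq, sub_zero, abs_of_nonneg dist_nonneg]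
  exact hN n hn

end Main

section Connect

variable {X : Type*} [MetricSpace X] [CompactSpace X] [ConnectedSpace X]

/-- Any point of the connected component of `x` in an open set `W` can be joined to `x`
by a compact connected subset of `W`. -/
lemma exists_continuum_of_mem_component
    (hreg : ∀ x : X, ∀ ε > (0 : ℝ), ∃ U : Set X,
      IsOpen U ∧ x ∈ U ∧ U ⊆ Metric.ball x ε ∧ (frontier U).Finite)
    {W : Set X} (hW : IsOpen W) {x : X} (hxW : x ∈ W) :
    ∀ y ∈ connectedComponentIn W x,
      ∃ A : Set X, IsCompact A ∧ IsPreconnected A ∧ A ⊆ W ∧ x ∈ A ∧ y ∈ A := by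
  classical
  set D := connectedComponentIn W x with hD
  have hDW : D ⊆ W := connectedComponentIn_subset W x
  set T : Set X := {y | ∃ A : Set X, IsCompact A ∧ IsPreconnected A ∧ A ⊆ W ∧ x ∈ A ∧ y ∈ A}
    with hT
  -- choose compact connected neighborhoods
  have hKex : ∀ w : X, w ∈ W →
      ∃ K : Set X, IsCompact K ∧ IsPreconnected K ∧ K ⊆ W ∧ K ∈ nhds w :=
    fun w hw => key_nbhd hreg hW hw
  set K : X → Set X := fun w => if h : w ∈ W then (hKex w h).choose else ∅ with hK
  have hKspec : ∀ w ∈ W, IsCompact (K w) ∧ IsPreconnected (K w) ∧ K w ⊆ W ∧ K w ∈ nhds w := by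
    intro w hw
    simp only [hK, dif_pos hw]
    exact (hKex w hw).choose_spec
  set U₁ : Set X := ⋃ (w : X) (_ : w ∈ D ∩ T), interior (K w) with hU₁
  set U₂ : Set X := ⋃ (w : X) (_ : w ∈ D \ T), interior (K w) with hU₂
  have hU₁open : IsOpen U₁ := isOpen_iUnion fun w => isOpen_iUnion fun _ => isOpen_interior
  have hU₂open : IsOpen U₂ := isOpen_iUnion fun w => isOpen_iUnion fun _ => isOpen_interior
  have hcover : D ⊆ U₁ ∪ U₂ := by
    intro w hw
    have hwint : w ∈ interior (K w) :=
      mem_interior_iff_mem_nhds.mpr (hKspec w (hDW hw)).2.2.2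
    by_cases hwT : w ∈ T
    · left; exact Set.mem_iUnion₂.mpr ⟨w, ⟨hw, hwT⟩, hwint⟩
    · right; exact Set.mem_iUnion₂.mpr ⟨w, ⟨hw, hwT⟩, hwint⟩
  have hxT : x ∈ T := ⟨{x}, isCompact_singleton, isPreconnected_singleton,
    Set.singleton_subset_iff.mpr hxW, rfl, rfl⟩
  have hxD : x ∈ D := mem_connectedComponentIn hxW
  have hne₁ : (D ∩ U₁).Nonempty := by
    refine ⟨x, hxD, ?_⟩
    exact Set.mem_iUnion₂.mpr ⟨x, ⟨hxD, hxT⟩,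
      mem_interior_iff_mem_nhds.mpr (hKspec x hxW).2.2.2⟩
  have hdisj : D ∩ (U₁ ∩ U₂) = ∅ := by
    ext v
    simp only [Set.mem_inter_iff, Set.mem_empty_iff_false, iff_false, not_and]
    intro _ hvU₁ hvU₂
    obtain ⟨w₁, hw₁, hv₁⟩ := Set.mem_iUnion₂.mp hvU₁
    obtain ⟨w₂, hw₂, hv₂⟩ := Set.mem_iUnion₂.mp hvU₂
    obtain ⟨A, hAc, hAconn, hAW, hxA, hw₁A⟩ := hw₁.2
    have hK₁ := hKspec w₁ (hDW hw₁.1)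
    have hK₂ := hKspec w₂ (hDW hw₂.1)
    have hw₁K : w₁ ∈ K w₁ := mem_of_mem_nhds hK₁.2.2.2
    have hw₂K : w₂ ∈ K w₂ := mem_of_mem_nhds hK₂.2.2.2
    -- A ∪ K w₁ ∪ K w₂ is a continuum joining x and w₂
    have hunion1 : IsPreconnected (A ∪ K w₁) :=
      IsPreconnected.union w₁ hw₁A hw₁K hAconn hK₁.2.1
    have hunion2 : IsPreconnected ((A ∪ K w₁) ∪ K w₂) :=
      IsPreconnected.union v (Or.inr (interior_subset hv₁)) (interior_subset hv₂)
        hunion1 hK₂.2.1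
    apply hw₂.2
    exact ⟨(A ∪ K w₁) ∪ K w₂, (hAc.union hK₁.1).union hK₂.1, hunion2,
      Set.union_subset (Set.union_subset hAW hK₁.2.2.1) hK₂.2.2.1,
      Or.inl (Or.inl hxA), Or.inr hw₂K⟩
  intro y hyD
  by_contra hyT
  have hne₂ : (D ∩ U₂).Nonempty := by
    refine ⟨y, hyD, ?_⟩
    exact Set.mem_iUnion₂.mpr ⟨y, ⟨hyD, hyT⟩,
      mem_interior_iff_mem_nhds.mpr (hKspec y (hDW hyD)).2.2.2⟩
  obtain ⟨v, hv⟩ := (isPreconnected_connectedComponentIn (F := W) (x := x))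
    U₁ U₂ hU₁open hU₂open hcover hne₁ hne₂
  have : v ∈ D ∩ (U₁ ∩ U₂) := hv
  rw [hdisj] at this
  exact this

end Connect

/-- If `f` is a homeomorphism of a regular curve `X` and `D` is a connected component of
`X \ Ω(f)`, then every pair of points of `D` is asymptotic with respect to `f` and with
respect to `f⁻¹`. -/
theorem pairs_asymptotic_in_component {X : Type*}
    [MetricSpace X] [CompactSpace X] [ConnectedSpace X] [Nonempty X]
    (hreg : ∀ x : X, ∀ ε > (0 : ℝ), ∃ U : Set X,
      IsOpen U ∧ x ∈ U ∧ U ⊆ Metric.ball x ε ∧ (frontier U).Finite)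
    (f : X ≃ₜ X) (x : X) (hx : x ∈ (nonwandering (⇑f))ᶜ) :
    ∀ y ∈ connectedComponentIn (nonwandering (⇑f))ᶜ x,
      ∀ z ∈ connectedComponentIn (nonwandering (⇑f))ᶜ x,
        Tendsto (fun n : ℕ => dist ((⇑f)^[n] y) ((⇑f)^[n] z)) atTop (nhds 0) ∧
        Tendsto (fun n : ℕ => dist ((⇑f.symm)^[n] y) ((⇑f.symm)^[n] z)) atTop (nhds 0) := by
  intro y hy z hz
  have hWopen : IsOpen (nonwandering (⇑f))ᶜ := isOpen_compl_nonwandering ⇑f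
  obtain ⟨A₁, hA₁c, hA₁conn, hA₁W, hxA₁, hyA₁⟩ :=
    exists_continuum_of_mem_component hreg hWopen hx y hy
  obtain ⟨A₂, hA₂c, hA₂conn, hA₂W, hxA₂, hzA₂⟩ :=
    exists_continuum_of_mem_component hreg hWopen hx z hz
  set A : Set X := A₁ ∪ A₂ with hA
  have hAc : IsCompact A := hA₁c.union hA₂c
  have hAconn : IsPreconnected A := IsPreconnected.union x hxA₁ hxA₂ hA₁conn hA₂conn
  have hAW : A ⊆ (nonwandering (⇑f))ᶜ := Set.union_subset hA₁W hA₂W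
  have hyA : y ∈ A := Or.inl hyA₁
  have hzA : z ∈ A := Or.inr hzA₂
  constructor
  · exact main_asymp hreg f hAc hAconn hAW hyA hzA
  · have hAW' : A ⊆ (nonwandering (⇑f.symm))ᶜ :=
      fun w hw hns => hAW hw (nonwandering_symm_subset f hns)
    exact main_asymp hreg f.symm hAc hAconn hAW' hyA hzA
end
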